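/- arXiv:2407.04570 — 4 statements merged into one kernel-verified Lean document; each statement's English description precedes it below -/
import Mathlib

section
/- Let p be an odd prime, n a positive integer, q = p^n, and let S be a subfield of 𝔽_q. Let P be a polynomial over 𝔽_q all of whose coefficients lie in S, and suppose the evaluation map x ↦ P(x) is planar on 𝔽_q. Then P maps S into S, and the restricted map S → S, x ↦ P(x), is planar on S. -/
/-- A function on a (finite) field is *planar* if for every nonzero `α` the map
`x ↦ f (x + α) - f x - f α` is a bijection. -/
def IsPlanar {K : Type*} [Ring K] (f : K → K) : Prop :=
  ∀ α : K, α ≠ 0 → Function.Bijective fun x => f (x + α) - f x - f α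

theorem Polynomial.eval_mem_of_coeff_mem {R σ : Type*} [Semiring R] [SetLike σ R]
    [SubsemiringClass σ R] {S : σ} {P : Polynomial R} (hcoeff : ∀ i, P.coeff i ∈ S) {x : R}
    (hx : x ∈ S) : P.eval x ∈ S := by
  rw [Polynomial.eval_eq_sum_range]
  exact sum_mem fun i _ => mul_mem (hcoeff i) (pow_mem hx i)

/-- On a finite subring, injectivity of the difference maps already gives bijectivity. -/
theorem IsPlanar.restrict {K σ : Type*} [Ring K] [SetLike σ K] [SubringClass σ K] {S : σ}
    [Finite S] {f : K → K} (hf : IsPlanar f) (hS : ∀ x : S, f x ∈ S) :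
    IsPlanar fun x : S => (⟨f x, hS x⟩ : S) := by
  intro α hα
  refine Finite.injective_iff_bijective.mp fun x y hxy => Subtype.ext ?_
  exact (hf α (by exact_mod_cast hα)).injective (by simpa using congrArg Subtype.val hxy)

theorem stmt3_general {K : Type*} [Field K] [Fintype K]
    (S : Subfield K) (P : Polynomial K) (hcoeff : ∀ i, P.coeff i ∈ S)
    (hplanar : IsPlanar fun x : K => P.eval x) :
    ∃ hmaps : ∀ x : S, P.eval (x : K) ∈ S,
      IsPlanar fun x : S => (⟨P.eval (x : K), hmaps x⟩ : S) := by
  have hmaps : ∀ x : S, P.eval (x : K) ∈ S := fun x => P.eval_mem_of_coeff_mem hcoeff x.2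
  exact ⟨hmaps, hplanar.restrict hmaps⟩

theorem stmt3 (p n : ℕ) (hp : p.Prime) (hodd : Odd p) (hn : 0 < n)
    {K : Type*} [Field K] [Fintype K] (hcard : Fintype.card K = p ^ n)
    (S : Subfield K) (P : Polynomial K) (hcoeff : ∀ i, P.coeff i ∈ S)
    (hplanar : IsPlanar fun x : K => P.eval x) :
    ∃ hmaps : ∀ x : S, P.eval (x : K) ∈ S,
      IsPlanar fun x : S => (⟨P.eval (x : K), hmaps x⟩ : S) :=
  stmt3_general S P hcoeff hplanar
end

section
/- Let p be an odd prime. A function F : 𝔽_p → 𝔽_p is planar if and only if there exist a, b, c ∈ 𝔽_p with a ≠ 0 such that F(x) = a·x² + b·x + c for all x ∈ 𝔽_p. -/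
/-!
Adding a linear term `s * x` to a planar function keeps it planar, and for planar `g` the double
power sums `∑ x, ∑ y, (g x - g y) ^ k` equal `∑ α ≠ 0, ∑ z, z ^ k`: they vanish for `0 < k < p - 1`
and equal `1` for `k = p - 1`. Expanding them binomially, induction on `r` shows that the power sums
`∑ x, g x ^ r` vanish for `0 < 2 r < p - 1`, while for `2 r = p - 1` their square is a nonzero
constant. Applied to `g = F + s • id`, these are polynomials in `s` of degree `r < p`, so the mixed
moments `∑ x, F x ^ i * x ^ j` vanish for `0 < i + j ≤ (p - 1) / 2`, except when `j = 0` and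
`i = (p - 1) / 2`.
If the interpolation polynomial `P` of `F` had degree `n ≥ 3`, then for `i = (p - 1) / n` and
`j = (p - 1) % n` the polynomial `P ^ i * X ^ j` has degree exactly `p - 1`, so that moment equals
`-(leading coefficient of P) ^ i ≠ 0`.
-/

open Finset Polynomial

theorem sum_sum_sub_pow {ι R : Type*} [Fintype ι] [CommRing R] (g : ι → R) (k : ℕ) :
    ∑ x, ∑ y, (g x - g y) ^ k =
      ∑ m ∈ range (k + 1), (-1) ^ (m + k) * (∑ x, g x ^ m) * (∑ y, g y ^ (k - m)) * k.choose m := by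
  simp_rw [sub_pow, mul_sum, sum_mul]
  rw [sum_comm]
  exact (sum_congr rfl fun y _ => sum_comm).trans sum_comm

theorem sum_range_choose_mul_eq_central {R : Type*} [CommRing R] (M : ℕ → R) (r : ℕ)
    (hM : ∀ m < r, M m = 0) :
    ∑ m ∈ range (2 * r + 1), (-1) ^ (m + 2 * r) * M m * M (2 * r - m) * (2 * r).choose m =
      (-1) ^ r * M r ^ 2 * (2 * r).choose r := by
  rw [sum_eq_single r]
  · rw [show 2 * r - r = r by omega, pow_add, pow_mul]
    ring
  · intro m hm hmr
    rw [mem_range] at hm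
    rcases lt_or_gt_of_ne hmr with h | h
    · rw [hM m h]; ring
    · rw [hM (2 * r - m) (by omega)]; ring
  · intro h; exact absurd (mem_range.mpr (by omega)) h

namespace FiniteField

variable {K : Type*} [Field K] [Fintype K]

theorem sum_pow_of_lt_card {k : ℕ} (hk : k < Fintype.card K) :
    ∑ x : K, x ^ k = if k = Fintype.card K - 1 then -1 else 0 := by
  split_ifs with h
  · classical
    have hq : 1 < Fintype.card K := Fintype.one_lt_card
    subst h
    rw [← sum_erase_add _ _ (mem_univ 0), zero_pow (by omega), add_zero,
      sum_congr rfl fun x hx => pow_card_sub_one_eq_one x (ne_of_mem_erase hx),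
      sum_const, card_erase_of_mem (mem_univ _), card_univ, nsmul_one,
      Nat.cast_sub Fintype.card_pos, cast_card_eq_zero, Nat.cast_one, zero_sub]
  · exact sum_pow_lt_card_sub_one K k (by omega)

theorem sum_eval_eq_neg_coeff {Q : K[X]} (hQ : Q.natDegree < Fintype.card K) :
    ∑ x : K, Q.eval x = -Q.coeff (Fintype.card K - 1) := by
  have hq : 0 < Fintype.card K := Fintype.card_pos
  simp_rw [eval_eq_sum_range' hQ]
  rw [sum_comm]
  simp_rw [← mul_sum]
  rw [sum_congr rfl fun k hk => by rw [sum_pow_of_lt_card (mem_range.mp hk)]]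
  simp [mul_ite, hq]

end FiniteField

namespace Polynomial

variable {K : Type*} [Field K] [Fintype K]

theorem exists_natDegree_lt_card_eval_eq (F : K → K) :
    ∃ P : K[X], P.natDegree < Fintype.card K ∧ ∀ x, P.eval x = F x := by
  classical
  have hinj : Set.InjOn id ((univ : Finset K) : Set K) := Function.injective_id.injOn
  refine ⟨Lagrange.interpolate univ id F, ?_, fun x =>
    Lagrange.eval_interpolate_at_node F hinj (mem_univ x)⟩
  by_cases h0 : Lagrange.interpolate univ id F = 0
  · rw [h0, natDegree_zero]; exact Fintype.card_pos
  · exact (natDegree_lt_iff_degree_lt h0).mpr (Lagrange.degree_interpolate_lt F hinj)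

theorem natDegree_eq_zero_of_forall_eval_sq_eq {Q : K[X]} {c : K}
    (hQ : 2 * Q.natDegree < Fintype.card K) (h : ∀ s, Q.eval s ^ 2 = c) : Q.natDegree = 0 := by
  have hsq : Q ^ 2 - C c = 0 := by
    refine eq_zero_of_natDegree_lt_card_of_eval_eq_zero _ Function.injective_id
      (fun s => by simp [h]) ?_
    refine (natDegree_sub_le _ _).trans_lt ?_
    rw [natDegree_C, natDegree_pow]
    omega
  have := congrArg natDegree (sub_eq_zero.mp hsq)
  rw [natDegree_pow, natDegree_C] at this
  omega

end Polynomial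

theorem two_mul_div_add_mod_le {m n : ℕ} (hm : Even m) (hn : 3 ≤ n) (hnm : n ≤ m) :
    2 * (m / n + m % n) ≤ m ∧ (2 * (m / n + m % n) < m ∨ m % n ≠ 0) := by
  have hdiv := Nat.div_add_mod m n
  have hmod := Nat.mod_lt m (by omega : n > 0)
  have hq : 1 ≤ m / n := Nat.div_pos hnm (by omega)
  obtain ⟨k, hk⟩ := hm
  rcases Nat.eq_or_lt_of_le hq with hq1 | hq2
  · rw [← hq1] at hdiv ⊢; omega
  · have : 2 * n ≤ n * (m / n) := by nlinarith
    constructor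
    · nlinarith
    · by_cases hr : m % n = 0
      · left; nlinarith
      · right; exact hr

section MomentPoly

variable {K : Type*} [CommRing K] [Fintype K]

def mixedMoment (F : K → K) (i j : ℕ) : K := ∑ x, F x ^ i * x ^ j

noncomputable def momentPoly (F : K → K) (r : ℕ) : K[X] := ∑ x, (C (F x) + X * C x) ^ r

theorem eval_momentPoly (F : K → K) (r : ℕ) (s : K) :
    (momentPoly F r).eval s = ∑ x, (F x + s * x) ^ r := by
  simp only [momentPoly, eval_finsetSum, eval_pow, eval_add, eval_mul, eval_X, eval_C]

theorem coeff_momentPoly (F : K → K) (r j : ℕ) :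
    (momentPoly F r).coeff j = r.choose j * mixedMoment F (r - j) j := by
  have hterm : ∀ x : K, (C (F x) + X * C x) ^ r =
      ∑ m ∈ range (r + 1), C (r.choose m * F x ^ (r - m) * x ^ m) * X ^ m := fun x => by
    rw [add_comm, add_pow]
    refine sum_congr rfl fun m _ => ?_
    simp only [map_mul, map_pow, map_natCast]
    ring
  simp_rw [momentPoly, mixedMoment, finsetSum_coeff, hterm, finsetSum_coeff, coeff_C_mul_X_pow,
    mul_sum]
  refine sum_congr rfl fun x _ => ?_
  rw [sum_ite_eq]
  split_ifs with h
  · ring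
  · rw [mem_range, not_lt] at h
    rw [Nat.choose_eq_zero_of_lt (by omega), Nat.cast_zero, zero_mul]

theorem natDegree_momentPoly_le (F : K → K) (r : ℕ) : (momentPoly F r).natDegree ≤ r := by
  rw [natDegree_le_iff_coeff_eq_zero]
  intro j hj
  rw [coeff_momentPoly, Nat.choose_eq_zero_of_lt hj, Nat.cast_zero, zero_mul]

end MomentPoly

theorem IsPlanar.add_mul {K : Type*} [Ring K] {f : K → K} (hf : IsPlanar f) (s : K) :
    IsPlanar fun x => f x + s * x := by
  intro α hα
  convert hf α hα using 2 with x
  noncomm_ring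

theorem not_isPlanar_affine {K : Type*} [Ring K] [Nontrivial K] (b c : K) :
    ¬ IsPlanar fun x => b * x + c := by
  intro h
  have := (h 1 one_ne_zero).injective (a₁ := 0) (a₂ := 1) (by noncomm_ring)
  exact zero_ne_one this

theorem isPlanar_quadratic {K : Type*} [Field K] {a : K} (ha : a ≠ 0) (h2 : (2 : K) ≠ 0)
    (b c : K) : IsPlanar fun x => a * x ^ 2 + b * x + c := by
  intro α hα
  have hslope : 2 * a * α ≠ 0 := mul_ne_zero (mul_ne_zero h2 ha) hα
  convert (Equiv.subRight c).bijective.comp (mulLeft_bijective₀ _ hslope) using 1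
  ext x
  simp only [Function.comp_apply, Equiv.subRight_apply]
  ring

theorem IsPlanar.sum_sum_sub_pow_eq_ite {K : Type*} [Field K] [Fintype K] {g : K → K}
    (hg : IsPlanar g) {k : ℕ} (hk0 : k ≠ 0) (hk : k < Fintype.card K) :
    ∑ x, ∑ y, (g x - g y) ^ k = if k = Fintype.card K - 1 then 1 else 0 := by
  classical
  have hdiff : ∀ α ≠ 0, ∑ y, (g (y + α) - g y) ^ k = ∑ z : K, z ^ k := fun α hα => by
    calc ∑ y, (g (y + α) - g y) ^ k = ∑ y, (g (y + α) - g y - g α + g α) ^ k := by simp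
      _ = ∑ z, (z + g α) ^ k := (hg α hα).sum_comp fun z => (z + g α) ^ k
      _ = ∑ z : K, z ^ k := Equiv.sum_comp (Equiv.addRight (g α)) fun z => z ^ k
  calc ∑ x, ∑ y, (g x - g y) ^ k = ∑ α, ∑ y, (g (y + α) - g y) ^ k :=
        sum_comm.trans <| (sum_congr rfl fun y _ =>
          (Equiv.sum_comp (Equiv.addLeft y) fun x => (g x - g y) ^ k).symm).trans sum_comm
    _ = ∑ α ∈ univ.erase (0 : K), ∑ z : K, z ^ k := by
        rw [← add_sum_erase _ _ (mem_univ 0),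
          sum_congr rfl fun α hα => hdiff α (ne_of_mem_erase hα)]
        simp [zero_pow hk0]
    _ = _ := by
        rw [sum_const, card_erase_of_mem (mem_univ _), card_univ,
          FiniteField.sum_pow_of_lt_card hk]
        simp [Nat.cast_sub (Fintype.card_pos (α := K))]

section PrimeField

variable {p : ℕ} [Fact p.Prime]

theorem ZMod.natCast_choose_ne_zero {n k : ℕ} (hn : n < p) (hk : k ≤ n) :
    (n.choose k : ZMod p) ≠ 0 := by
  rw [Ne, ZMod.natCast_eq_zero_iff]
  exact (Nat.Prime.coprime_iff_not_dvd Fact.out).mp (Nat.Prime.coprime_choose_of_lt Fact.out hn hk)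

theorem IsPlanar.neg_one_pow_mul_sq_sum_pow {g : ZMod p → ZMod p} (hg : IsPlanar g) {r : ℕ}
    (hr0 : r ≠ 0) (hr : 2 * r ≤ p - 1) :
    (-1) ^ r * (∑ x, g x ^ r) ^ 2 * (2 * r).choose r = if 2 * r = p - 1 then 1 else 0 := by
  induction r using Nat.strong_induction_on with
  | _ r ih =>
  have hM : ∀ m < r, ∑ x, g x ^ m = 0 := by
    intro m hm
    rcases Nat.eq_zero_or_pos m with rfl | hm0
    · simp
    · have h := ih m hm hm0.ne' (by omega)
      rw [if_neg (by omega)] at h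
      simpa [ZMod.natCast_choose_ne_zero (p := p) (by omega : 2 * m < p) (by omega : m ≤ 2 * m)]
        using h
  have hp := (Fact.out : p.Prime).two_le
  rw [← sum_range_choose_mul_eq_central (fun m => ∑ x, g x ^ m) r hM, ← sum_sum_sub_pow g,
    hg.sum_sum_sub_pow_eq_ite (by omega) (by rw [ZMod.card]; omega), ZMod.card]

theorem IsPlanar.mixedMoment_eq_zero {F : ZMod p → ZMod p} (hF : IsPlanar F) {i j : ℕ}
    (hij : i + j ≠ 0) (h : 2 * (i + j) ≤ p - 1) (hj : 2 * (i + j) < p - 1 ∨ j ≠ 0) :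
    mixedMoment F i j = 0 := by
  set r := i + j with hr
  have hp := (Fact.out : p.Prime).two_le
  have hu : (-1) ^ r * ((2 * r).choose r : ZMod p) ≠ 0 :=
    mul_ne_zero (pow_ne_zero _ (neg_ne_zero.mpr one_ne_zero))
      (ZMod.natCast_choose_ne_zero (by omega) (by omega))
  set c : ZMod p := ((-1) ^ r * ((2 * r).choose r : ZMod p))⁻¹ * if 2 * r = p - 1 then 1 else 0
  have hsq : ∀ s, (momentPoly F r).eval s ^ 2 = c := fun s => by
    rw [eq_inv_mul_iff_mul_eq₀ hu, eval_momentPoly]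
    linear_combination (hF.add_mul s).neg_one_pow_mul_sq_sum_pow hij h
  have hdeg : (momentPoly F r).natDegree = 0 :=
    natDegree_eq_zero_of_forall_eval_sq_eq
      (by rw [ZMod.card]; have := natDegree_momentPoly_le F r; omega) hsq
  have hcoeff : (momentPoly F r).coeff j = 0 := by
    rcases eq_or_ne j 0 with rfl | hj0
    · have hc : c = 0 := by simp [c, if_neg (show 2 * r ≠ p - 1 by omega)]
      rw [coeff_zero_eq_eval_zero]
      exact pow_eq_zero_iff two_ne_zero |>.mp ((hsq 0).trans hc)
    · exact coeff_eq_zero_of_natDegree_lt (by omega)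
  rw [coeff_momentPoly, show r - j = i by omega] at hcoeff
  exact (mul_eq_zero.mp hcoeff).resolve_left (ZMod.natCast_choose_ne_zero (by omega) (by omega))

theorem IsPlanar.natDegree_le_two {F : ZMod p → ZMod p} (hF : IsPlanar F) (hodd : Odd p)
    {P : (ZMod p)[X]} (hPdeg : P.natDegree < p) (hP : ∀ x, P.eval x = F x) :
    P.natDegree ≤ 2 := by
  by_contra! hn
  set n := P.natDegree
  have hP0 : P ≠ 0 := by rintro rfl; simp [n] at hn
  have hm : Even (p - 1) := hodd.tsub_odd odd_one
  obtain ⟨hle, hlt⟩ := two_mul_div_add_mod_le hm hn (by omega)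
  set i := (p - 1) / n
  set j := (p - 1) % n
  have hi : i ≠ 0 := (Nat.div_pos (by omega) (by omega)).ne'
  have hdeg : (P ^ i * X ^ j).natDegree = p - 1 := by
    rw [natDegree_mul (pow_ne_zero _ hP0) (pow_ne_zero _ X_ne_zero), natDegree_pow,
      natDegree_X_pow, mul_comm, Nat.div_add_mod]
  have hsum : mixedMoment F i j = -(P ^ i * X ^ j).coeff (p - 1) := by
    have := FiniteField.sum_eval_eq_neg_coeff (K := ZMod p) (Q := P ^ i * X ^ j)
      (by rw [ZMod.card]; omega)
    simpa [ZMod.card, mixedMoment, hP] using this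
  rw [hF.mixedMoment_eq_zero (fun h => hi (Nat.add_eq_zero_iff.mp h).1) hle hlt, ← hdeg,
    coeff_natDegree, leadingCoeff_mul, leadingCoeff_pow, leadingCoeff_X_pow, mul_one, eq_comm, neg_eq_zero] at hsum
  exact pow_ne_zero _ (leadingCoeff_ne_zero.mpr hP0) hsum

end PrimeField

theorem stmt6 (p : ℕ) (hp : p.Prime) (hodd : Odd p) (F : ZMod p → ZMod p) :
    IsPlanar F ↔ ∃ a b c : ZMod p, a ≠ 0 ∧ ∀ x, F x = a * x ^ 2 + b * x + c := by
  have := Fact.mk hp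
  constructor
  · intro hF
    obtain ⟨P, hPdeg, hP⟩ := exists_natDegree_lt_card_eval_eq F
    rw [ZMod.card] at hPdeg
    have hform : ∀ x, F x = P.coeff 2 * x ^ 2 + P.coeff 1 * x + P.coeff 0 := fun x => by
      rw [← hP, eval_eq_sum_range' (Nat.lt_succ_of_le (hF.natDegree_le_two hodd hPdeg hP))]
      simp only [sum_range_succ, sum_range_zero]
      ring
    refine ⟨P.coeff 2, P.coeff 1, P.coeff 0, fun h0 => ?_, hform⟩
    refine not_isPlanar_affine (P.coeff 1) (P.coeff 0) ?_
    simpa [funext hform, h0] using hF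
  · rintro ⟨a, b, c, ha, hF⟩
    have h2 : (2 : ZMod p) ≠ 0 := Ring.two_ne_zero (by
      rw [ZMod.ringChar_zmod_n]; rintro rfl; norm_num at hodd)
    simpa [← funext hF] using isPlanar_quadratic ha h2 b c
end

section
/- Let p be a prime with p > 3, let s be a positive integer, and let u_0, u_1, ..., u_s ∈ {0, 1, p−2, p−1}. Set v = Σ_{i=1}^{s} (2·u_i − u_{i−1})·p^{i−1}, an integer which may be negative. If v ≠ p^s − 1, then there exists δ ∈ {−1, 0, 1} such that: (i) 0 ≤ v + δ·p^s ≤ p^s − 1, so v + δ·p^s has base-p digits γ_1, ..., γ_s ∈ {0,...,p−1} with v + δ·p^s = Σ_{i=1}^{s} γ_i·p^{i−1}; (ii) 0 < u_s + δ + 1 ≤ p − 1; and (iii) if u_s = 1, δ = 1 and p > 5, then there exists an index j ∈ {1,...,s} with γ_j ∉ {0, 1, p−2, p−1}. -/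
open Finset

def Ecar (p : ℤ) (c : ℕ → ℤ) : ℕ → ℤ
  | 0 => 0
  | n + 1 => (c n + Ecar p c n) / p

def Gdig (p : ℤ) (c : ℕ → ℤ) (n : ℕ) : ℤ := (c n + Ecar p c n) % p

lemma ecar_rel (p : ℤ) (c : ℕ → ℤ) (n : ℕ) :
    c n + Ecar p c n = p * Ecar p c (n + 1) + Gdig p c n :=
  (Int.mul_ediv_add_emod (c n + Ecar p c n) p).symm

lemma gdig_nonneg (p : ℤ) (hp : 0 < p) (c : ℕ → ℤ) (n : ℕ) : 0 ≤ Gdig p c n :=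
  Int.emod_nonneg _ (by omega)

lemma gdig_lt (p : ℤ) (hp : 0 < p) (c : ℕ → ℤ) (n : ℕ) : Gdig p c n < p :=
  Int.emod_lt_of_pos _ hp

lemma ecar_bound (p : ℤ) (hp : 0 < p) (c : ℕ → ℤ)
    (hc : ∀ i, 1 - p ≤ c i ∧ c i ≤ 2 * p - 2) :
    ∀ n, -1 ≤ Ecar p c n ∧ Ecar p c n ≤ 1 := by
  intro n
  induction n with
  | zero => simp [Ecar]
  | succ n ih =>
    have h := ecar_rel p c n
    have hg1 := gdig_nonneg p hp c n
    have hg2 := gdig_lt p hp c n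
    have hcn := hc n
    set q := Ecar p c (n + 1) with hq
    have h1 : (-2 : ℤ) < q := by
      by_contra hcon
      push_neg at hcon
      have : p * q ≤ p * (-2) := mul_le_mul_of_nonneg_left hcon hp.le
      linarith [h, hg2, hcn.1, ih.1]
    have h2 : q < 2 := by
      by_contra hcon
      push_neg at hcon
      have : p * 2 ≤ p * q := mul_le_mul_of_nonneg_left hcon hp.le
      linarith [h, hg1, hcn.2, ih.2]
    omega

lemma sum_eq_aux (p : ℤ) (c : ℕ → ℤ) (n : ℕ) :
    ∑ i ∈ range n, c i * p ^ i
      = (∑ i ∈ range n, Gdig p c i * p ^ i) + Ecar p c n * p ^ n := by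
  induction n with
  | zero => simp [Ecar]
  | succ n ih =>
    rw [sum_range_succ, sum_range_succ, ih, pow_succ]
    have h := ecar_rel p c n
    linear_combination (p : ℤ) ^ n * h
lemma stmt11_key (q : ℤ) (s : ℕ) (hs : 0 < s) (hq5 : 5 ≤ q) (U : ℕ → ℤ)
    (hUmem : ∀ i, U i = 0 ∨ U i = 1 ∨ U i = q - 2 ∨ U i = q - 1)
    (v : ℤ) (hv : v = ∑ i ∈ Finset.range s, (2 * U (i + 1) - U i) * q ^ i)
    (hne : v ≠ q ^ s - 1) :
    ∃ δ : ℤ, (δ = -1 ∨ δ = 0 ∨ δ = 1) ∧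
      (0 ≤ v + δ * q ^ s ∧ v + δ * q ^ s ≤ q ^ s - 1) ∧
      ∃ g : ℕ → ℤ, (∀ i, 0 ≤ g i ∧ g i ≤ q - 1) ∧
        v + δ * q ^ s = ∑ i ∈ Finset.range s, g i * q ^ i ∧
        (0 < U s + δ + 1 ∧ U s + δ + 1 ≤ q - 1) ∧
        (U s = 1 → δ = 1 → 7 ≤ q →
          ∃ j < s, ¬(g j = 0 ∨ g j = 1 ∨ g j = q - 2 ∨ g j = q - 1)) := by
  have hq0 : (0 : ℤ) < q := by omega
  set c : ℕ → ℤ := fun i => 2 * U (i + 1) - U i with hcdef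
  have hca : ∀ i, c i = 2 * U (i + 1) - U i := fun i => rfl
  have hcb : ∀ i, 1 - q ≤ c i ∧ c i ≤ 2 * q - 2 := by
    intro i
    have h1 := hUmem i
    have h2 := hUmem (i + 1)
    rw [hca i]
    omega
  have hErange := ecar_bound q hq0 c hcb
  have hE0 : Ecar q c 0 = 0 := rfl
  -- Claim A
  have claimA : ∀ n, Ecar q c n = 1 → U n = q - 2 ∨ U n = q - 1 := by
    intro n hn
    match n with
    | 0 => rw [hE0] at hn; omega
    | m + 1 =>
      have h := ecar_rel q c m
      rw [hn, hca m] at h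
      have hg1 := gdig_nonneg q hq0 c m
      have hEm := hErange m
      have h1 := hUmem m
      have h2 := hUmem (m + 1)
      omega
  -- Claim B
  have claimB : ∀ n, Ecar q c n = -1 → U n = 0 ∨ U n = 1 := by
    intro n hn
    match n with
    | 0 => rw [hE0] at hn; omega
    | m + 1 =>
      have h := ecar_rel q c m
      rw [hn, hca m] at h
      have hg2 := gdig_lt q hq0 c m
      have hEm := hErange m
      have h1 := hUmem m
      have h2 := hUmem (m + 1)
      omega
  -- Claim D
  have claimD : ∀ n, U n = q - 1 → Ecar q c n = 0 → ∀ i < n, Gdig q c i = q - 1 := by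
    intro n
    induction n with
    | zero => intro _ _ i hi; omega
    | succ m ih =>
      intro hU1 hE1
      have h := ecar_rel q c m
      rw [hE1, hca m, hU1] at h
      have hg1 := gdig_nonneg q hq0 c m
      have hg2 := gdig_lt q hq0 c m
      have hEm := hErange m
      have h1 := hUmem m
      have hEm3 : Ecar q c m = -1 ∨ Ecar q c m = 0 ∨ Ecar q c m = 1 := by omega
      have key : Ecar q c m = 0 ∧ U m = q - 1 ∧ Gdig q c m = q - 1 := by
        rcases hEm3 with he | he | he
        · have := claimB m he; omega
        · omega
        · have := claimA m he; omega
      intro i hi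
      rcases Nat.lt_succ_iff_lt_or_eq.mp hi with hi' | hi'
      · exact ih key.2.1 key.1 i hi'
      · rw [hi']; exact key.2.2
  -- Claim E
  have claimE : ∀ n, ((U n = 1 ∧ Ecar q c n = -1) ∨ (U n = q - 2 ∧ Ecar q c n = 1)) →
      7 ≤ q →
      ∃ j < n, ¬(Gdig q c j = 0 ∨ Gdig q c j = 1 ∨ Gdig q c j = q - 2 ∨ Gdig q c j = q - 1) := by
    intro n
    induction n using Nat.strong_induction_on with
    | _ n ih =>
      intro hn hq7
      match n with
      | 0 => rw [hE0] at hn; omega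
      | m + 1 =>
        have h := ecar_rel q c m
        have hg1 := gdig_nonneg q hq0 c m
        have hg2 := gdig_lt q hq0 c m
        have hEm := hErange m
        have hum := hUmem m
        have hEm3 : Ecar q c m = -1 ∨ Ecar q c m = 0 ∨ Ecar q c m = 1 := by omega
        rw [hca m] at h
        rcases hn with ⟨hU1, hE1⟩ | ⟨hU1, hE1⟩
        · rw [hE1, hU1] at h
          rcases hEm3 with he | he | he
          · have := claimB m he; omega
          · exact ⟨m, lt_add_one m, by omega⟩
          · rcases claimA m he with hu' | hu'
            · obtain ⟨j, hj, hgj⟩ := ih m (lt_add_one m) (Or.inr ⟨hu', he⟩) hq7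
              exact ⟨j, by omega, hgj⟩
            · exact ⟨m, lt_add_one m, by omega⟩
        · rw [hE1, hU1] at h
          rcases hEm3 with he | he | he
          · rcases claimB m he with hu' | hu'
            · exact ⟨m, lt_add_one m, by omega⟩
            · obtain ⟨j, hj, hgj⟩ := ih m (lt_add_one m) (Or.inl ⟨hu', he⟩) hq7
              exact ⟨j, by omega, hgj⟩
          · exact ⟨m, lt_add_one m, by omega⟩
          · have := claimA m he; omega
  have hv' : v = ∑ i ∈ Finset.range s, c i * q ^ i := hv
  have hsum := sum_eq_aux q c s
  have hv2 : v + (-Ecar q c s) * q ^ s = ∑ i ∈ Finset.range s, Gdig q c i * q ^ i := by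
    rw [hv', hsum]; ring
  have hpow_nonneg : ∀ i : ℕ, (0 : ℤ) ≤ q ^ i := fun i => pow_nonneg hq0.le i
  have hgeom : ∑ i ∈ Finset.range s, (q - 1) * q ^ i = q ^ s - 1 := by
    have h := geom_sum_mul q s
    calc ∑ i ∈ Finset.range s, (q - 1) * q ^ i
        = (∑ i ∈ Finset.range s, q ^ i) * (q - 1) := by
          rw [Finset.sum_mul]; exact Finset.sum_congr rfl fun i _ => mul_comm _ _
      _ = q ^ s - 1 := h
  have hub : ∑ i ∈ Finset.range s, Gdig q c i * q ^ i ≤ q ^ s - 1 := by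
    rw [← hgeom]
    refine Finset.sum_le_sum fun i _ => ?_
    exact mul_le_mul_of_nonneg_right (by linarith [gdig_lt q hq0 c i]) (hpow_nonneg i)
  have hlb : 0 ≤ ∑ i ∈ Finset.range s, Gdig q c i * q ^ i :=
    Finset.sum_nonneg fun i _ => mul_nonneg (gdig_nonneg q hq0 c i) (hpow_nonneg i)
  have hforce : U s = q - 1 → Ecar q c s = 1 := by
    intro hUs
    have hEs := hErange s
    have hEs3 : Ecar q c s = -1 ∨ Ecar q c s = 0 ∨ Ecar q c s = 1 := by omega
    rcases hEs3 with he | he | he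
    · have := claimB s he; omega
    · exfalso
      apply hne
      have hall := claimD s hUs he
      have heq : ∑ i ∈ Finset.range s, Gdig q c i * q ^ i = q ^ s - 1 := by
        rw [← hgeom]
        exact Finset.sum_congr rfl fun i hi => by rw [hall i (Finset.mem_range.mp hi)]
      rw [hv', hsum, he, heq]; ring
    · exact he
  refine ⟨-Ecar q c s, ?_, ?_, Gdig q c, ?_, hv2, ?_, ?_⟩
  · have hEs := hErange s; omega
  · rw [hv2]; exact ⟨hlb, hub⟩
  · intro i
    have h1 := gdig_nonneg q hq0 c i
    have h2 := gdig_lt q hq0 c i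
    omega
  · have hEs := hErange s
    have hA := claimA s
    have hB := claimB s
    rcases hUmem s with h' | h' | h' | h'
    · have hne1 : Ecar q c s ≠ 1 := fun he => by rcases hA he with h'' | h'' <;> omega
      omega
    · omega
    · have hnem : Ecar q c s ≠ -1 := fun he => by rcases hB he with h'' | h'' <;> omega
      omega
    · have h1 := hforce h'
      omega
  · intro hUs1 hd hq7
    have hEs1 : Ecar q c s = -1 := by omega
    exact claimE s (Or.inl ⟨hUs1, hEs1⟩) hq7
theorem stmt11 (p s : ℕ) (hp : p.Prime) (hp3 : 3 < p) (hs : 0 < s)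
    (u : Fin (s + 1) → ℕ) (hu : ∀ i, u i ∈ ({0, 1, p - 2, p - 1} : Set ℕ))
    (v : ℤ)
    (hv : v = ∑ i : Fin s, (2 * (u i.succ : ℤ) - (u i.castSucc : ℤ)) * (p : ℤ) ^ (i : ℕ))
    (hne : v ≠ (p : ℤ) ^ s - 1) :
    ∃ δ : ℤ, δ ∈ ({-1, 0, 1} : Set ℤ) ∧
      (0 ≤ v + δ * (p : ℤ) ^ s ∧ v + δ * (p : ℤ) ^ s ≤ (p : ℤ) ^ s - 1) ∧
      ∃ γ : Fin s → ℕ, (∀ i, γ i ≤ p - 1) ∧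
        v + δ * (p : ℤ) ^ s = ∑ i : Fin s, (γ i : ℤ) * (p : ℤ) ^ (i : ℕ) ∧
        (0 < (u (Fin.last s) : ℤ) + δ + 1 ∧ (u (Fin.last s) : ℤ) + δ + 1 ≤ (p : ℤ) - 1) ∧
        (u (Fin.last s) = 1 → δ = 1 → 5 < p →
          ∃ j : Fin s, γ j ∉ ({0, 1, p - 2, p - 1} : Set ℕ)) := by
  have hp5 : 5 ≤ p := by
    have h4 : p ≠ 4 := by rintro rfl; norm_num at hp
    omega
  have hp7 : 5 < p → 7 ≤ p := by
    intro h
    have h6 : p ≠ 6 := by rintro rfl; norm_num at hp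
    omega
  have hq5 : (5 : ℤ) ≤ (p : ℤ) := by omega
  have hmem : ∀ i : ℕ,
      ((u ⟨min i s, Nat.lt_succ_of_le (Nat.min_le_right i s)⟩ : ℕ) : ℤ) = 0 ∨
      ((u ⟨min i s, Nat.lt_succ_of_le (Nat.min_le_right i s)⟩ : ℕ) : ℤ) = 1 ∨
      ((u ⟨min i s, Nat.lt_succ_of_le (Nat.min_le_right i s)⟩ : ℕ) : ℤ) = (p : ℤ) - 2 ∨
      ((u ⟨min i s, Nat.lt_succ_of_le (Nat.min_le_right i s)⟩ : ℕ) : ℤ) = (p : ℤ) - 1 := by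
    intro i
    have hm := hu ⟨min i s, Nat.lt_succ_of_le (Nat.min_le_right i s)⟩
    simp only [Set.mem_insert_iff, Set.mem_singleton_iff] at hm
    omega
  have hvkey : v = ∑ i ∈ Finset.range s,
      (2 * ((u ⟨min (i + 1) s, Nat.lt_succ_of_le (Nat.min_le_right (i + 1) s)⟩ : ℕ) : ℤ)
        - ((u ⟨min i s, Nat.lt_succ_of_le (Nat.min_le_right i s)⟩ : ℕ) : ℤ)) * (p : ℤ) ^ i := by
    rw [hv, ← Fin.sum_univ_eq_sum_range (fun i =>
      (2 * ((u ⟨min (i + 1) s, Nat.lt_succ_of_le (Nat.min_le_right (i + 1) s)⟩ : ℕ) : ℤ)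
        - ((u ⟨min i s, Nat.lt_succ_of_le (Nat.min_le_right i s)⟩ : ℕ) : ℤ)) * (p : ℤ) ^ i) s]
    refine Finset.sum_congr rfl fun i _ => ?_
    have e1 : (⟨min (↑i + 1) s, Nat.lt_succ_of_le (Nat.min_le_right (↑i + 1) s)⟩ : Fin (s + 1))
        = i.succ := Fin.ext (by simpa using Nat.min_eq_left i.isLt)
    have e2 : (⟨min (↑i : ℕ) s, Nat.lt_succ_of_le (Nat.min_le_right (↑i : ℕ) s)⟩ : Fin (s + 1))
        = i.castSucc := Fin.ext (by simpa using Nat.min_eq_left i.isLt.le)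
    rw [e1, e2]
  obtain ⟨δ, hδ, hbnd, g, hg, hsumg, hcond, hdig⟩ :=
    stmt11_key (p : ℤ) s hs hq5
      (fun i => ((u ⟨min i s, Nat.lt_succ_of_le (Nat.min_le_right i s)⟩ : ℕ) : ℤ))
      hmem v hvkey hne
  have hlastfin : (⟨min s s, Nat.lt_succ_of_le (Nat.min_le_right s s)⟩ : Fin (s + 1))
      = Fin.last s := Fin.ext (by simp)
  simp only [hlastfin] at hcond hdig
  refine ⟨δ, ?_, hbnd, fun i => (g (i : ℕ)).toNat, ?_, ?_, hcond, ?_⟩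
  · simp only [Set.mem_insert_iff, Set.mem_singleton_iff]
    exact hδ
  · intro i
    show (g (i : ℕ)).toNat ≤ p - 1
    have h1 := hg (i : ℕ)
    omega
  · rw [hsumg, ← Fin.sum_univ_eq_sum_range (fun i => g i * (p : ℤ) ^ i) s]
    refine Finset.sum_congr rfl fun i _ => ?_
    rw [Int.toNat_of_nonneg (hg (i : ℕ)).1]
  · intro h1 h2 h3
    have hq7 : (7 : ℤ) ≤ (p : ℤ) := by have := hp7 h3; omega
    have hU1 : ((u (Fin.last s) : ℕ) : ℤ) = 1 := by omega
    obtain ⟨j, hj, hgj⟩ := hdig hU1 h2 hq7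
    refine ⟨⟨j, hj⟩, ?_⟩
    simp only [Set.mem_insert_iff, Set.mem_singleton_iff]
    have h0 := (hg j).1
    omega
end

section
/- Let p be an odd prime, n ≥ 2, and q = p^n. Let r be an integer with 2 ≤ r ≤ p−1, and let d be a positive integer with d < q−1 such that d ≡ r (mod p−1) and every base-p digit d_i of d (for i = 0, 1, ..., n−1, where d = Σ_{i=0}^{n−1} d_i·p^i with 0 ≤ d_i ≤ p−1) satisfies d_i ≥ r. Then there exists an integer e with 1 ≤ e ≤ q−1 such that s_p(e ⋆ d) − s_p(e) > n(p−1)/2. -/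
/-- Base-`p` digit sum. -/
def sp (p e : ℕ) : ℕ := (Nat.digits p e).sum

/-- The operation `⋆` on `{0, 1, …, q - 1}`: `e ⋆ d = 0` if `e = 0` or `d = 0`, and
otherwise `e ⋆ d` is the unique `r` with `1 ≤ r ≤ q - 1` and `r ≡ e * d (mod q - 1)`. -/
def star (q e d : ℕ) : ℕ :=
  if e = 0 ∨ d = 0 then 0
  else if (e * d) % (q - 1) = 0 then q - 1 else (e * d) % (q - 1)

/-!
If `s_p(d) ≥ n(p-1)/2 + 2`, then `e = 1` works. Otherwise take `e = p + p² + ⋯ + p^{n-1}`, so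
that `e + 1 = (q-1)/(p-1)`. Multiplying `d ≡ r (mod p-1)` by `(q-1)/(p-1)` gives
`(e+1) d ≡ r (q-1)/(p-1) (mod q-1)`, hence `e ⋆ d = ∑ (r + p - 1 - d_i) p^i`, where `d_i ≥ r`
makes the coefficients base-`p` digits. So `s_p(e ⋆ d) = n(r + p - 1) - s_p(d)`, which beats
`s_p(e) + n(p-1)/2 = n - 1 + n(p-1)/2` because `r ≥ 2` and `s_p(d)` is small.
-/

section DigitSum

variable {p : ℕ}

@[simp]
lemma sp_zero : sp p 0 = 0 := by
  simp [sp]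

lemma sp_one (hp : 1 < p) : sp p 1 = 1 := by
  simp [sp, Nat.digits_of_lt p 1 one_ne_zero hp]

lemma sp_add_mul (hp : 1 < p) {c : ℕ} (hc : c < p) (x : ℕ) :
    sp p (c + p * x) = c + sp p x := by
  by_cases h : c = 0 ∧ x = 0
  · simp [h.1, h.2]
  · rw [sp, Nat.digits_add p hp c x hc (by tauto), List.sum_cons, sp]

lemma sp_sum_mul_pow (hp : 1 < p) {n : ℕ} (c : Fin n → ℕ) (hc : ∀ i, c i < p) :
    sp p (∑ i, c i * p ^ (i : ℕ)) = ∑ i, c i := by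
  induction n with
  | zero => simp
  | succ n ih =>
    have hsplit : ∑ i : Fin (n + 1), c i * p ^ (i : ℕ)
        = c 0 + p * ∑ i : Fin n, c i.succ * p ^ (i : ℕ) := by
      simp only [Fin.sum_univ_succ, Fin.val_zero, pow_zero, mul_one, Fin.val_succ, pow_succ,
        Finset.mul_sum]
      exact congrArg _ (Finset.sum_congr rfl fun i _ => by ring)
    rw [hsplit, sp_add_mul hp (hc 0), ih _ fun i => hc i.succ, Fin.sum_univ_succ]

lemma sp_sum_pow (hp : 1 < p) (n : ℕ) : sp p (∑ i : Fin n, p ^ (i : ℕ)) = n := by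
  simpa using sp_sum_mul_pow hp (fun _ : Fin n => 1) fun _ => hp

lemma sp_mul_sum_pow (hp : 1 < p) (m : ℕ) : sp p (p * ∑ i : Fin m, p ^ (i : ℕ)) = m := by
  simpa [sp_sum_pow hp] using sp_add_mul hp (c := 0) (by omega) (∑ i : Fin m, p ^ (i : ℕ))

end DigitSum

lemma pred_mul_sum_pow {p : ℕ} (hp : 1 ≤ p) (n : ℕ) :
    (p - 1) * ∑ i : Fin n, p ^ (i : ℕ) = p ^ n - 1 := by
  have h := geom_sum_mul_add (p - 1) n
  rw [Nat.sub_add_cancel hp] at h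
  rw [Fin.sum_univ_eq_sum_range (fun i => p ^ i), mul_comm]
  omega

lemma sum_mul_pow_le {p n : ℕ} (hp : 1 ≤ p) (c : Fin n → ℕ) (hc : ∀ i, c i ≤ p - 1) :
    ∑ i, c i * p ^ (i : ℕ) ≤ p ^ n - 1 := by
  rw [← pred_mul_sum_pow hp, Finset.mul_sum]
  exact Finset.sum_le_sum fun i _ => Nat.mul_le_mul_right _ (hc i)

lemma mul_sum_pow_add_one (p m : ℕ) :
    p * ∑ i : Fin m, p ^ (i : ℕ) + 1 = ∑ i : Fin (m + 1), p ^ (i : ℕ) := by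
  simp only [Fin.sum_univ_succ, Fin.val_zero, pow_zero, Fin.val_succ, pow_succ, Finset.mul_sum]
  exact add_comm _ _ |>.trans (congrArg _ (Finset.sum_congr rfl fun i _ => by ring))

lemma star_eq_of_modEq {q e d x : ℕ} (he : e ≠ 0) (hd : d ≠ 0) (hx : 0 < x) (hxq : x ≤ q - 1)
    (h : e * d ≡ x [MOD q - 1]) : star q e d = x := by
  unfold _root_.star
  rw [if_neg (by tauto), show e * d % (q - 1) = x % (q - 1) from h]
  rcases hxq.lt_or_eq with hlt | rfl
  · rw [Nat.mod_eq_of_lt hlt, if_neg hx.ne']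
  · rw [Nat.mod_self, if_pos rfl]

lemma mul_modEq_sum_complement {p n r d e : ℕ} (hp : 1 ≤ p) (dig : Fin n → ℕ)
    (hdig : ∀ i, dig i ≤ p - 1) (hsum : d = ∑ i, dig i * p ^ (i : ℕ))
    (hmod : d ≡ r [MOD p - 1]) (he : e + 1 = ∑ i : Fin n, p ^ (i : ℕ)) :
    e * d ≡ ∑ i, (r + (p - 1 - dig i)) * p ^ (i : ℕ) [MOD p ^ n - 1] := by
  set u := ∑ i : Fin n, p ^ (i : ℕ)
  have hq : u * (p - 1) = p ^ n - 1 := (mul_comm _ _).trans (pred_mul_sum_pow hp n)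
  have hX : ∑ i, (r + (p - 1 - dig i)) * p ^ (i : ℕ) + d = u * r + (p ^ n - 1) := by
    rw [hsum, ← Finset.sum_add_distrib, ← hq, ← mul_add, Finset.sum_mul]
    refine Finset.sum_congr rfl fun i _ => ?_
    rw [← add_mul, mul_comm]
    congr 1
    have := hdig i
    omega
  refine Nat.ModEq.add_right_cancel' d ?_
  calc e * d + d = u * d := by rw [← he]; ring
    _ ≡ u * r [MOD p ^ n - 1] := hq ▸ Nat.ModEq.mul_left' u hmod
    _ ≡ u * r + (p ^ n - 1) [MOD p ^ n - 1] := (Nat.add_mod_right _ _).symm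
    _ = _ := hX.symm

lemma sp_star_add_sp {p n r d e : ℕ} (hp : 1 < p) (hr : 0 < r) (hd : d ≠ 0) (he0 : e ≠ 0)
    (he : e + 1 = ∑ i : Fin n, p ^ (i : ℕ)) (dig : Fin n → ℕ) (hdig : ∀ i, dig i ≤ p - 1)
    (hge : ∀ i, r ≤ dig i) (hsum : d = ∑ i, dig i * p ^ (i : ℕ)) (hmod : d ≡ r [MOD p - 1]) :
    sp p (star (p ^ n) e d) + sp p d = n * r + n * (p - 1) := by
  have hdig_lt : ∀ i, dig i < p := fun i => by have := hdig i; omega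
  have hcompl_lt : ∀ i, r + (p - 1 - dig i) < p := fun i => by
    have := hge i; have := hdig i; omega
  set X := ∑ i, (r + (p - 1 - dig i)) * p ^ (i : ℕ)
  have hspX : sp p X + sp p d = n * r + n * (p - 1) := by
    rw [hsum, sp_sum_mul_pow hp _ hcompl_lt, sp_sum_mul_pow hp _ hdig_lt,
      ← Finset.sum_add_distrib, ← mul_add,
      Finset.sum_congr rfl fun i _ =>
        show r + (p - 1 - dig i) + dig i = r + (p - 1) by have := hdig i; omega]
    simp
  have hsp_d : sp p d ≤ n * (p - 1) := by
    rw [hsum, sp_sum_mul_pow hp _ hdig_lt]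
    simpa using Finset.sum_le_sum (s := Finset.univ) fun i _ => hdig i
  have hX0 : X ≠ 0 := fun h => by
    have hn : n ≠ 0 := by rintro rfl; simp at he
    have : n * 1 ≤ n * r := Nat.mul_le_mul_left _ hr
    simp only [h, sp_zero] at hspX
    omega
  rw [star_eq_of_modEq he0 hd (Nat.pos_of_ne_zero hX0) (sum_mul_pow_le hp.le _ fun i => by
      have := hcompl_lt i; omega)
    (mul_modEq_sum_complement hp.le dig hdig hsum hmod he)]
  exact hspX

theorem stmt13_general (p n : ℕ) (hp : p.Prime) (hn : 2 ≤ n)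
    (r : ℕ) (hr1 : 2 ≤ r)
    (d : ℕ) (hd0 : 0 < d) (hdlt : d < p ^ n - 1) (hmod : d ≡ r [MOD p - 1])
    (dig : Fin n → ℕ) (hdig : ∀ i, dig i ≤ p - 1)
    (hsum : d = ∑ i : Fin n, dig i * p ^ (i : ℕ)) (hge : ∀ i, r ≤ dig i) :
    ∃ e : ℕ, 1 ≤ e ∧ e ≤ p ^ n - 1 ∧
      sp p e + n * (p - 1) / 2 < sp p (star (p ^ n) e d) := by
  have hp1 := hp.one_lt
  have hhalf : 2 * (n * (p - 1) / 2) ≤ n * (p - 1) := Nat.mul_div_le _ _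
  by_cases hlarge : n * (p - 1) / 2 + 2 ≤ sp p d
  · refine ⟨1, le_rfl, by omega, ?_⟩
    rw [star_eq_of_modEq one_ne_zero hd0.ne' hd0 hdlt.le (by rw [one_mul]), sp_one hp1]
    omega
  obtain ⟨m, rfl⟩ : ∃ m, n = m + 1 := ⟨n - 1, by omega⟩
  set e := p * ∑ i : Fin m, p ^ (i : ℕ)
  have hspe : sp p e = m := sp_mul_sum_pow hp1 m
  have he0 : e ≠ 0 := fun h => by rw [h, sp_zero] at hspe; omega
  have he : e + 1 = ∑ i : Fin (m + 1), p ^ (i : ℕ) := mul_sum_pow_add_one p m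
  have hspX := sp_star_add_sp hp1 (by omega) hd0.ne' he0 he dig hdig hge hsum hmod
  have hr : (m + 1) * 2 ≤ (m + 1) * r := Nat.mul_le_mul_left _ hr1
  have hlt : e + 1 ≤ p ^ (m + 1) - 1 := by
    rw [he, ← pred_mul_sum_pow hp1.le]
    exact Nat.le_mul_of_pos_left _ (by omega)
  exact ⟨e, Nat.pos_of_ne_zero he0, by omega, by omega⟩

theorem stmt13 (p n : ℕ) (hp : p.Prime) (hodd : Odd p) (hn : 2 ≤ n)
    (r : ℕ) (hr1 : 2 ≤ r) (hr2 : r ≤ p - 1)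
    (d : ℕ) (hd0 : 0 < d) (hdlt : d < p ^ n - 1) (hmod : d ≡ r [MOD p - 1])
    (dig : Fin n → ℕ) (hdig : ∀ i, dig i ≤ p - 1)
    (hsum : d = ∑ i : Fin n, dig i * p ^ (i : ℕ)) (hge : ∀ i, r ≤ dig i) :
    ∃ e : ℕ, 1 ≤ e ∧ e ≤ p ^ n - 1 ∧
      sp p e + n * (p - 1) / 2 < sp p (star (p ^ n) e d) :=
  stmt13_general p n hp hn r hr1 d hd0 hdlt hmod dig hdig hsum hge
end
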